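/- If G = F⟨x₁,…,xₙ⟩ is a differential field extension of F generated by elements x₁,…,xₙ each of which is differentially algebraic over F, then G has finite transcendence degree over F; in particular, each xᵢ being differentially algebraic means the family (δ^j(xᵢ))_{j≥0} is algebraically dependent over F. -/

import Mathlib

open Polynomial

section Basics
variable {G : Type*} [Field G] (δ : G → G)
  (hadd : ∀ a b : G, δ (a + b) = δ a + δ b)
  (hmul : ∀ a b : G, δ (a * b) = a * δ b + b * δ a)

include hadd in
theorem dzero' : δ 0 = 0 := by
  have h := hadd 0 0
  simp only [add_zero] at h
  exact left_eq_add.mp h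

include hmul in
theorem done' : δ 1 = 0 := by
  have h := hmul 1 1
  simp only [mul_one, one_mul] at h
  exact left_eq_add.mp h

include hmul in
theorem dpow' (a : G) : ∀ t : ℕ, δ (a ^ (t + 1)) = (t + 1 : ℕ) * a ^ t * δ a := by
  intro t
  induction t with
  | zero =>
      have h := hmul a 1
      rw [done' δ hmul] at h
      simp only [mul_one, mul_zero, zero_add, one_mul] at h
      simp [h]
  | succ s ih =>
      have : a ^ (s + 2) = a * a ^ (s + 1) := by ring
      rw [this, hmul, ih]
      push_cast
      ring

include hadd hmul in
theorem dinv' (a : G) : δ a⁻¹ = -(a⁻¹ * a⁻¹ * δ a) := by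
  rcases eq_or_ne a 0 with rfl | h
  · simp [dzero' δ hadd]
  · have h1 : a * a⁻¹ = 1 := mul_inv_cancel₀ h
    have h2 := hmul a a⁻¹
    rw [h1, done' δ hmul] at h2
    have h3 : a * δ a⁻¹ = -(a⁻¹ * δ a) := by linear_combination -h2
    have h4 : δ a⁻¹ = a⁻¹ * (a * δ a⁻¹) := by
      rw [← mul_assoc, inv_mul_cancel₀ h, one_mul]
    rw [h4, h3]
    ring

include hadd hmul in
theorem deval' (q : G[X]) (a : G) :
    δ (q.eval a) = (derivative q).eval a * δ a + q.sum (fun t c => δ c * a ^ t) := by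
  induction q using Polynomial.induction_on' with
  | add p r hp hr =>
      rw [eval_add, hadd, hp, hr, derivative_add, eval_add,
        Polynomial.sum_add_index _ _ _ (fun t => by rw [dzero' δ hadd, zero_mul])
          (fun t b c => by rw [hadd, add_mul])]
      ring
  | monomial t c =>
      rw [eval_monomial, derivative_monomial, eval_monomial,
        Polynomial.sum_monomial_index c _ (by rw [dzero' δ hadd, zero_mul]), hmul]
      cases t with
      | zero => simp [done' δ hmul]
      | succ s =>
          simp only [Nat.succ_sub_one]
          rw [dpow' δ hmul a s]
          push_cast
          ring

end Basics

section Core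
variable {F G : Type*} [Field F] [Field G] [Algebra F G] [CharZero G]

theorem dmem (δ : G → G)
    (hadd : ∀ a b : G, δ (a + b) = δ a + δ b)
    (hmul : ∀ a b : G, δ (a * b) = a * δ b + b * δ a)
    (K L : IntermediateField F G) (hKL : K ≤ L) {a : G} (haL : a ∈ L)
    (ha : IsAlgebraic K a) (hδK : ∀ g ∈ K, δ g ∈ L) : δ a ∈ L := by
  have hCZ : CharZero K := ⟨fun m n h => by
    have := congrArg (algebraMap K G) h
    simpa [map_natCast] using this⟩
  have hint : IsIntegral K a := ha.isIntegral
  set p := minpoly K a with hp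
  set q := p.map (algebraMap K G) with hq
  have hq0 : q.eval a = 0 := by
    rw [hq, Polynomial.eval_map, ← Polynomial.aeval_def, minpoly.aeval]
  have hev := deval' δ hadd hmul q a
  rw [hq0, dzero' δ hadd] at hev
  -- the derivative evaluated at a is nonzero
  have hdne : (Polynomial.derivative q).eval a ≠ 0 := by
    rw [hq, Polynomial.derivative_map, Polynomial.eval_map, ← Polynomial.aeval_def]
    intro h0
    have hpd : Polynomial.derivative p ≠ 0 := by
      intro hd
      have h1 := Polynomial.natDegree_eq_zero_of_derivative_eq_zero hd
      have h2 := minpoly.natDegree_pos hint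
      rw [← hp] at h2
      omega
    have hle := minpoly.degree_le_of_ne_zero K a hpd h0
    exact absurd hle (not_le.mpr (Polynomial.degree_derivative_lt (minpoly.ne_zero hint)))
  -- memberships
  have hcoeff : ∀ t : ℕ, q.coeff t ∈ K := by
    intro t
    rw [hq, Polynomial.coeff_map]
    exact (p.coeff t).2
  have hd_mem : (Polynomial.derivative q).eval a ∈ L := by
    rw [Polynomial.eval_eq_sum_range]
    refine sum_mem fun t _ => mul_mem ?_ (pow_mem haL t)
    rw [Polynomial.coeff_derivative]
    exact mul_mem (hKL (hcoeff (t + 1))) (add_mem (IntermediateField.natCast_mem L t) (one_mem L))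
  have hS_mem : q.sum (fun t c => δ c * a ^ t) ∈ L := by
    rw [Polynomial.sum_def]
    exact sum_mem fun t _ => mul_mem (hδK _ (hcoeff t)) (pow_mem haL t)
  -- solve for δ a
  have : δ a = -(q.sum (fun t c => δ c * a ^ t)) / (Polynomial.derivative q).eval a := by
    field_simp
    linear_combination -hev
  rw [this, div_eq_mul_inv]
  exact mul_mem (neg_mem hS_mem) (inv_mem hd_mem)
end Core

section Extract
variable {F G : Type*} [Field F] [Field G] [Algebra F G]

theorem extract_alg (f : ℕ → G) (h : ¬ AlgebraicIndependent F f) :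
    ∃ m : ℕ, IsAlgebraic (IntermediateField.adjoin F (f '' Set.Iio m)) (f m) := by
  classical
  -- first, some finite initial segment is dependent
  have hfin : ∃ N, ¬ AlgebraicIndependent F (fun j : Fin N => f j) := by
    by_contra hc
    push_neg at hc
    apply h
    rw [algebraicIndependent_iff]
    intro p hp
    obtain ⟨k, g, hginj, q, rfl⟩ := MvPolynomial.exists_fin_rename p
    set N := (Finset.univ.sup fun i : Fin k => g i) + 1 with hN
    have hglt : ∀ i, g i < N := fun i =>
      Nat.lt_succ_of_le (Finset.le_sup (Finset.mem_univ i))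
    set g' : Fin k → Fin N := fun i => ⟨g i, hglt i⟩ with hg'
    have hg'inj : Function.Injective g' := fun i j hij => by
      apply hginj
      simpa [hg', Fin.ext_iff] using hij
    have hcomp : f ∘ g = (fun j : Fin N => f j) ∘ g' := rfl
    have hAI : AlgebraicIndependent F (f ∘ g) := by
      rw [hcomp]; exact (hc N).comp g' hg'inj
    have hq : MvPolynomial.aeval (f ∘ g) q = 0 := by
      rwa [MvPolynomial.aeval_rename] at hp
    rw [algebraicIndependent_iff] at hAI
    rw [hAI q hq, map_zero]
  -- take the least such N
  obtain ⟨N, hNdep⟩ := hfin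
  have h0 : AlgebraicIndependent F (fun j : Fin 0 => f j) :=
    algebraicIndependent_empty_type_iff.mpr (algebraMap F G).injective
  -- minimal counterexample
  have hex : ∃ N, ¬ AlgebraicIndependent F (fun j : Fin N => f j) := ⟨N, hNdep⟩
  classical
  set N₀ := Nat.find hex with hN₀
  have hdep : ¬ AlgebraicIndependent F (fun j : Fin N₀ => f j) := Nat.find_spec hex
  have hN₀pos : N₀ ≠ 0 := by
    intro h
    rw [h] at hdep
    exact hdep h0
  obtain ⟨m, hm⟩ : ∃ m, N₀ = m + 1 := ⟨N₀ - 1, by omega⟩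
  have hind : AlgebraicIndependent F (fun j : Fin m => f j) :=
    of_not_not (Nat.find_min hex (by omega))
  refine ⟨m, ?_⟩
  by_contra htr
  have hrange : Set.range (fun j : Fin m => f j) = f '' Set.Iio m := by
    ext y
    constructor
    · rintro ⟨j, rfl⟩; exact ⟨j, j.isLt, rfl⟩
    · rintro ⟨j, hj, rfl⟩; exact ⟨⟨j, hj⟩, rfl⟩
  -- transcendence over the intermediate field gives it over the subalgebra
  have htr2 : Transcendental (Algebra.adjoin F (Set.range fun j : Fin m => f j)) (f m) := by
    refine Transcendental.of_tower_top_of_subalgebra_le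
      (B := (IntermediateField.adjoin F (f '' Set.Iio m)).toSubalgebra) ?_ htr
    rw [hrange]
    exact IntermediateField.algebra_adjoin_le_adjoin F _
  have hop : AlgebraicIndependent F
      (fun o : Option (Fin m) => o.elim (f m) (fun j : Fin m => f j)) :=
    (hind.option_iff_transcendental (f m)).2 htr2
  set e : Fin N₀ → Option (Fin m) := fun j =>
    if h : (j : ℕ) < m then some ⟨j, h⟩ else none with he
  have heinj : Function.Injective e := by
    intro i j hij
    have hiN := i.isLt
    have hjN := j.isLt
    apply Fin.ext
    rw [he] at hij
    by_cases hi : (i : ℕ) < m <;> by_cases hj : (j : ℕ) < m <;>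
      simp only [hi, hj, dif_pos, dif_neg, not_false_iff, Option.some.injEq,
        reduceCtorEq, Fin.mk.injEq] at hij
    · exact hij
    · omega
  have hfe : (fun j : Fin N₀ => f j) =
      (fun o : Option (Fin m) => o.elim (f m) (fun j : Fin m => f j)) ∘ e := by
    funext j
    by_cases hj : (j : ℕ) < m
    · simp [he, hj]
    · have hjN := j.isLt
      have : (j : ℕ) = m := by omega
      simp [he, hj, this]
  exact hdep (hfe ▸ hop.comp e heinj)
end Extract

section Main
variable {F G : Type*} [Field F] [Field G] [Algebra F G]

/-- The "differential part" of an intermediate field `L`: elements of `L` whose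
derivative is also in `L`. -/
def dfield (δ : G → G)
    (hadd : ∀ a b : G, δ (a + b) = δ a + δ b)
    (hmul : ∀ a b : G, δ (a * b) = a * δ b + b * δ a)
    (hF : ∀ a : F, ∃ b : F, δ (algebraMap F G a) = algebraMap F G b)
    (L : IntermediateField F G) : IntermediateField F G where
  carrier := {g | g ∈ L ∧ δ g ∈ L}
  mul_mem' := fun {a b} ha hb => ⟨mul_mem ha.1 hb.1, by
    rw [hmul]; exact add_mem (mul_mem ha.1 hb.2) (mul_mem hb.1 ha.2)⟩
  one_mem' := ⟨one_mem L, by rw [done' δ hmul]; exact zero_mem L⟩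
  add_mem' := fun {a b} ha hb => ⟨add_mem ha.1 hb.1, by
    rw [hadd]; exact add_mem ha.2 hb.2⟩
  zero_mem' := ⟨zero_mem L, by rw [dzero' δ hadd]; exact zero_mem L⟩
  algebraMap_mem' := fun a => ⟨L.algebraMap_mem a, by
    obtain ⟨b, hb⟩ := hF a; rw [hb]; exact L.algebraMap_mem b⟩
  inv_mem' := fun a ha => ⟨inv_mem ha.1, by
    rw [dinv' δ hadd hmul]
    exact neg_mem (mul_mem (mul_mem (inv_mem ha.1) (inv_mem ha.1)) ha.2)⟩

theorem main_thm
    {F G : Type*} [Field F] [Field G] [Algebra F G] [CharZero G]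
    (δ : G → G)
    (hadd : ∀ a b : G, δ (a + b) = δ a + δ b)
    (hmul : ∀ a b : G, δ (a * b) = a * δ b + b * δ a)
    (hF : ∀ a : F, ∃ b : F, δ (algebraMap F G a) = algebraMap F G b)
    (n : ℕ) (x : Fin n → G)
    (hgen : IntermediateField.adjoin F
        {y : G | ∃ (i : Fin n) (j : ℕ), y = δ^[j] (x i)} = ⊤)
    (halg : ∀ i : Fin n, ¬ AlgebraicIndependent F (fun j : ℕ => δ^[j] (x i))) :
    ∃ s : Finset G,
      Algebra.IsAlgebraic (IntermediateField.adjoin F (s : Set G)) G := by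
  classical
  -- for each i, pick m i with δ^[m i] (x i) algebraic over the previous derivatives
  choose m hma using fun i => extract_alg (fun j => δ^[j] (x i)) (halg i)
  -- E i : the field generated by the first m i + 1 derivatives of x i
  set E : Fin n → IntermediateField F G := fun i =>
    IntermediateField.adjoin F ((fun j => δ^[j] (x i)) '' Set.Iic (m i)) with hE
  have hmemE : ∀ i, ∀ j ≤ m i, δ^[j] (x i) ∈ E i := fun i j hj =>
    IntermediateField.subset_adjoin F _ ⟨j, hj, rfl⟩
  -- the key step : δ^[m i + 1] (x i) ∈ E i
  have hkey : ∀ i, δ^[m i + 1] (x i) ∈ E i := by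
    intro i
    have hiter : δ^[m i + 1] (x i) = δ (δ^[m i] (x i)) := Function.iterate_succ_apply' δ _ _
    rw [hiter]
    refine dmem δ hadd hmul
      (IntermediateField.adjoin F ((fun j => δ^[j] (x i)) '' Set.Iio (m i))) (E i)
      (IntermediateField.adjoin.mono _ _ _ (Set.image_mono Set.Iio_subset_Iic_self))
      (hmemE i (m i) le_rfl) (hma i) ?_
    -- δ maps the lower field into E i
    have hle : IntermediateField.adjoin F ((fun j => δ^[j] (x i)) '' Set.Iio (m i)) ≤
        dfield δ hadd hmul hF (E i) := by
      rw [IntermediateField.adjoin_le_iff]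
      rintro y ⟨j, hj, rfl⟩
      exact ⟨hmemE i j (le_of_lt hj), by
        rw [← Function.iterate_succ_apply' δ]
        exact hmemE i (j + 1) hj⟩
    exact fun g hg => (hle hg).2
  -- E i is closed under δ
  have hdE : ∀ i, ∀ g ∈ E i, δ g ∈ E i := by
    intro i
    have hle : E i ≤ dfield δ hadd hmul hF (E i) := by
      rw [hE, IntermediateField.adjoin_le_iff]
      rintro y ⟨j, hj, rfl⟩
      have hj' : j ≤ m i := hj
      refine ⟨hmemE i j hj', ?_⟩
      rw [← Function.iterate_succ_apply' δ]
      rcases lt_or_eq_of_le hj' with h | h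
      · exact hmemE i (j + 1) h
      · rw [h]; exact hkey i
    exact fun g hg => (hle hg).2
  -- hence all derivatives lie in E i
  have hall : ∀ i, ∀ j, δ^[j] (x i) ∈ E i := by
    intro i j
    induction j with
    | zero => exact hmemE i 0 (Nat.zero_le _)
    | succ k ih =>
        rw [Function.iterate_succ_apply' δ]
        exact hdE i _ ih
  -- the finite set of generators
  set s : Finset G := Finset.univ.biUnion
    (fun i : Fin n => (Finset.range (m i + 1)).image fun j => δ^[j] (x i)) with hs
  refine ⟨s, ?_⟩
  have hEle : ∀ i, E i ≤ IntermediateField.adjoin F (s : Set G) := by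
    intro i
    rw [hE, IntermediateField.adjoin_le_iff]
    rintro y ⟨j, hj, rfl⟩
    apply IntermediateField.subset_adjoin
    simp only [hs, Finset.coe_biUnion, Finset.coe_image, Finset.coe_range, Set.mem_iUnion]
    exact ⟨i, Finset.mem_univ i, ⟨j, Nat.lt_succ_of_le hj, rfl⟩⟩
  have htop : IntermediateField.adjoin F (s : Set G) = ⊤ := by
    rw [← top_le_iff, ← hgen, IntermediateField.adjoin_le_iff]
    rintro y ⟨i, j, rfl⟩
    exact hEle i (hall i j)
  refine ⟨fun g => ?_⟩
  have hg : g ∈ IntermediateField.adjoin F (s : Set G) := htop ▸ IntermediateField.mem_top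
  have := isAlgebraic_algebraMap
    (R := IntermediateField.adjoin F (s : Set G)) (A := G)
    (⟨g, hg⟩ : IntermediateField.adjoin F (s : Set G))
  simpa using this
end Main


/-- If `G = F⟨x₁, …, xₙ⟩` is a differential field extension of `F` (characteristic zero)
generated by finitely many elements each of which is differentially algebraic over `F`,
then `G` has finite transcendence degree over `F`: there is a finite subset `s ⊆ G` such
that `G` is algebraic over the subfield generated by `F` and `s`. -/
theorem diffAlgebraic_generators_finite_trdeg
    {F G : Type*} [Field F] [Field G] [Algebra F G] [CharZero G]
    (δ : G → G)
    (hadd : ∀ a b : G, δ (a + b) = δ a + δ b)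
    (hmul : ∀ a b : G, δ (a * b) = a * δ b + b * δ a)
    -- `F` is a differential subfield of `G`
    (hF : ∀ a : F, ∃ b : F, δ (algebraMap F G a) = algebraMap F G b)
    (n : ℕ) (x : Fin n → G)
    -- `G` is generated over `F` as a differential field by `x₁, …, xₙ`
    (hgen : IntermediateField.adjoin F
        {y : G | ∃ (i : Fin n) (j : ℕ), y = δ^[j] (x i)} = ⊤)
    -- each `xᵢ` is differentially algebraic over `F`
    (halg : ∀ i : Fin n, ¬ AlgebraicIndependent F (fun j : ℕ => δ^[j] (x i))) :
    ∃ s : Finset G,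
      Algebra.IsAlgebraic (IntermediateField.adjoin F (s : Set G)) G := by
  exact main_thm δ hadd hmul hF n x hgen halg
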